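/- Let K/ℚ be a quadratic extension with nontrivial automorphism τ, let c ∈ ℚ, and let α ∈ K be a point of exact period 3 for f_c(z) = z^2 + c. Suppose the 3-cycle of α, {α, f_c(α), f_c^2(α)}, is the set of all K-rational points of exact period 3 for f_c. Then α ∈ ℚ. -/

import Mathlib

/-!
Since `c` is rational, `τ` commutes with `f`, so it maps the unique `K`-rational 3-cycle to
itself: `τ α = f^[k] α` for some `k < 3`. As `τ` is an involution, `α = τ (τ α) = f^[2k] α`,
which for `k = 1, 2` contradicts the exact period 3 of `α`. Hence `τ α = α`, and an element of a
quadratic extension fixed by the nontrivial automorphism is rational.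
-/

theorem AlgEquiv.mem_range_algebraMap_of_apply_eq_self {F A : Type*} [Field F] [Ring A]
    [IsDomain A] [Algebra F A] (hp : (Module.finrank F A).Prime) {τ : A ≃ₐ[F] A}
    (hτ : τ ≠ AlgEquiv.refl) {x : A} (hx : τ x = x) : x ∈ Set.range (algebraMap F A) := by
  have := Subalgebra.isSimpleOrder_of_finrank_prime F A hp
  rcases eq_bot_or_eq_top (AlgHom.equalizer (τ : A →ₐ[F] A) (AlgHom.id F A)) with h | h
  · exact Algebra.mem_bot.mp (h ▸ hx)
  · exact absurd (AlgEquiv.coe_toAlgHom_injective (AlgHom.equalizer_eq_top.mp h)) hτ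

theorem AlgEquiv.mul_self_eq_one_of_finrank_eq_two {F K : Type*} [Field F] [Field K]
    [Algebra F K] (h : Module.finrank F K = 2) (τ : K ≃ₐ[F] K) : τ * τ = 1 := by
  have : FiniteDimensional F K := .of_finrank_pos (by omega)
  have hcard : Fintype.card (K ≃ₐ[F] K) ≤ 2 := h ▸ AlgEquiv.card_le
  have hpow := pow_card_eq_one (x := τ)
  interval_cases hc : Fintype.card (K ≃ₐ[F] K)
  · exact absurd hc Fintype.card_ne_zero
  · rw [pow_one] at hpow; simp [hpow]
  · rwa [pow_two] at hpow

theorem Function.Commute.apply_eq_self_of_mem_period_three_orbit {X : Type*} {f τ : X → X}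
    (hcomm : Function.Commute τ f) (hτ : Function.Involutive τ) {x : X}
    (h3 : f^[3] x = x) (h1 : f x ≠ x) (h2 : f^[2] x ≠ x)
    (hx : τ x ∈ ({x, f x, f^[2] x} : Set X)) : τ x = x := by
  have hreturn : ∀ k, τ x = f^[k] x → x = f^[2 * k] x := fun k hk => by
    calc x = τ (τ x) := (hτ x).symm
      _ = τ (f^[k] x) := by rw [hk]
      _ = f^[k] (τ x) := (hcomm.iterate_right k).eq x
      _ = f^[2 * k] x := by rw [hk, ← Function.iterate_add_apply, two_mul]
  rcases hx with h | h | h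
  · exact h
  · exact absurd (hreturn 1 h).symm h2
  · have h4 : f^[4] x = f x := by rw [Function.iterate_succ_apply', h3]
    exact absurd (h4 ▸ hreturn 2 h).symm h1

/-- Let `K/ℚ` be quadratic with nontrivial automorphism `τ`, `c ∈ ℚ`, and `α ∈ K` of
exact period 3 for `f_c(z) = z^2 + c`. If the 3-cycle of `α` consists of all `K`-rational
points of exact period 3, then `α ∈ ℚ`. -/
theorem period_three_point_is_rational
    (K : Type*) [Field K] [Algebra ℚ K] (hdim : Module.finrank ℚ K = 2)
    (τ : K ≃ₐ[ℚ] K) (hτ : τ ≠ AlgEquiv.refl)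
    (c : ℚ) (α : K)
    (f : K → K) (hf : f = fun z => z ^ 2 + algebraMap ℚ K c)
    (hper : f^[3] α = α) (h1 : f α ≠ α) (h2 : f^[2] α ≠ α)
    (hall : ∀ β : K, f^[3] β = β → f β ≠ β → f^[2] β ≠ β →
      β ∈ ({α, f α, f^[2] α} : Set K)) :
    ∃ q : ℚ, algebraMap ℚ K q = α := by
  have hcomm : Function.Commute τ f := fun z => by simp [hf]
  have hinv : Function.Involutive τ := fun z => by
    simpa using DFunLike.congr_fun (τ.mul_self_eq_one_of_finrank_eq_two hdim) z
  have hmem : τ α ∈ ({α, f α, f^[2] α} : Set K) := hall (τ α)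
    (by rw [← (hcomm.iterate_right 3).eq, hper])
    (by rw [← hcomm.eq]; exact τ.injective.ne h1)
    (by rw [← (hcomm.iterate_right 2).eq]; exact τ.injective.ne h2)
  exact τ.mem_range_algebraMap_of_apply_eq_self (hdim ▸ Nat.prime_two) hτ
    (hcomm.apply_eq_self_of_mem_period_three_orbit hinv hper h1 h2 hmem)
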